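/- arXiv:1908.09375 — 3 statements merged into one kernel-verified Lean document; each statement's English description precedes it below -/
import Mathlib

section
/- Suppose L(W) = Σₙ exp(−yₙ fₙ(W)) with each fₙ positively homogeneous of degree K ≥ 1 and differentiable, and suppose W is a critical point of L that separates the data, i.e., yₙ fₙ(W) > 0 for all n. Then this leads to a contradiction: no finite critical point of the gradient separates the data. -/
open Real

/-!
Differentiating the exponential loss along the ray through `W` and using Euler's identity
`Df(W) W = K f(W)` for each `K`-homogeneous `fₙ` gives
`DL(W) W = -K ∑ₙ yₙ fₙ(W) exp(-yₙ fₙ(W))`. At a separating point every summand is positive,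
so this directional derivative is negative and `W` cannot be critical.
-/

section Euler

variable {E F : Type*} [NormedAddCommGroup E] [NormedSpace ℝ E]
  [NormedAddCommGroup F] [NormedSpace ℝ F]

theorem fderiv_apply_self_of_homogeneous {g : E → F} {K : ℕ} {x : E}
    (hg : DifferentiableAt ℝ g x) (hhom : ∀ l : ℝ, 0 < l → g (l • x) = l ^ K • g x) :
    fderiv ℝ g x x = (K : ℝ) • g x := by
  have hray : HasDerivAt (fun l : ℝ => l • x) x 1 := by
    simpa using (hasDerivAt_id (1 : ℝ)).smul_const x
  have hcomp : HasDerivAt (fun l : ℝ => g (l • x)) (fderiv ℝ g x x) 1 := by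
    rw [← one_smul ℝ x] at hg
    simpa [Function.comp_def] using hg.hasFDerivAt.comp_hasDerivAt 1 hray
  have hpow : HasDerivAt (fun l : ℝ => l ^ K • g x) ((K : ℝ) • g x) 1 := by
    simpa using (hasDerivAt_pow K (1 : ℝ)).smul_const (g x)
  have hagree : (fun l : ℝ => g (l • x)) =ᶠ[nhds 1] fun l => l ^ K • g x := by
    filter_upwards [eventually_gt_nhds one_pos] with l hl using hhom l hl
  exact hcomp.unique (hpow.congr_of_eventuallyEq hagree)

end Euler

section ExpLoss

variable {ι E : Type*} [Fintype ι] [NormedAddCommGroup E] [NormedSpace ℝ E]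

noncomputable def expLoss (y : ι → ℝ) (f : ι → E → ℝ) (w : E) : ℝ :=
  ∑ n, exp (-(y n * f n w))

theorem hasFDerivAt_expLoss {y : ι → ℝ} {f : ι → E → ℝ} {x : E}
    (hf : ∀ n, DifferentiableAt ℝ (f n) x) :
    HasFDerivAt (expLoss y f)
      (∑ n, exp (-(y n * f n x)) • -(y n • fderiv ℝ (f n) x)) x :=
  HasFDerivAt.fun_sum fun n _ => (((hf n).hasFDerivAt.const_mul (y n)).neg).exp

theorem fderiv_expLoss_apply_self {y : ι → ℝ} {f : ι → E → ℝ} {K : ℕ} {x : E}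
    (hf : ∀ n, DifferentiableAt ℝ (f n) x)
    (hhom : ∀ n, ∀ l : ℝ, 0 < l → f n (l • x) = l ^ K * f n x) :
    fderiv ℝ (expLoss y f) x x = -K * ∑ n, y n * f n x * exp (-(y n * f n x)) := by
  have heuler n : fderiv ℝ (f n) x x = K * f n x :=
    fderiv_apply_self_of_homogeneous (hf n) (hhom n)
  rw [(hasFDerivAt_expLoss hf).fderiv, sum_apply, Finset.mul_sum]
  refine Finset.sum_congr rfl fun n _ => ?_
  simp only [smul_apply, neg_apply, heuler, smul_eq_mul]
  ring

theorem fderiv_expLoss_apply_self_neg [Nonempty ι] {y : ι → ℝ} {f : ι → E → ℝ} {K : ℕ}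
    {x : E} (hK : K ≠ 0) (hf : ∀ n, DifferentiableAt ℝ (f n) x)
    (hhom : ∀ n, ∀ l : ℝ, 0 < l → f n (l • x) = l ^ K * f n x)
    (hsep : ∀ n, 0 < y n * f n x) :
    fderiv ℝ (expLoss y f) x x < 0 := by
  rw [fderiv_expLoss_apply_self hf hhom, neg_mul, neg_lt_zero]
  exact mul_pos (Nat.cast_pos.mpr (Nat.pos_of_ne_zero hK))
    (Finset.sum_pos (fun n _ => mul_pos (hsep n) (exp_pos _)) Finset.univ_nonempty)

end ExpLoss

theorem no_separating_critical_point_general {d N K : ℕ} (hN : 0 < N) (hK : 1 ≤ K)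
    (f : Fin N → EuclideanSpace ℝ (Fin d) → ℝ)
    (hf : ∀ n, Differentiable ℝ (f n))
    (hhom : ∀ n, ∀ l : ℝ, 0 < l → ∀ W, f n (l • W) = l ^ K * f n W)
    (y : Fin N → ℝ)
    (L : EuclideanSpace ℝ (Fin d) → ℝ)
    (hL : L = fun W => ∑ n, exp (-(y n * f n W)))
    (W : EuclideanSpace ℝ (Fin d))
    (hcrit : fderiv ℝ L W = 0)
    (hsep : ∀ n, 0 < y n * f n W) :
    False := by
  have : Nonempty (Fin N) := ⟨⟨0, hN⟩⟩
  have hneg := fderiv_expLoss_apply_self_neg (y := y) (by omega)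
    (fun n => (hf n).differentiableAt) (fun n l hl => hhom n l hl W) hsep
  rw [show expLoss y f = L from hL.symm, hcrit] at hneg
  exact lt_irrefl 0 hneg

/-- No finite critical point of the gradient of the exponential loss separates
the data. -/
theorem no_separating_critical_point {d N K : ℕ} (hN : 0 < N) (hK : 1 ≤ K)
    (f : Fin N → EuclideanSpace ℝ (Fin d) → ℝ)
    (hf : ∀ n, Differentiable ℝ (f n))
    (hhom : ∀ n, ∀ l : ℝ, 0 < l → ∀ W, f n (l • W) = l ^ K * f n W)
    (y : Fin N → ℝ) (hy : ∀ n, y n = 1 ∨ y n = -1)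
    (L : EuclideanSpace ℝ (Fin d) → ℝ)
    (hL : L = fun W => ∑ n, exp (-(y n * f n W)))
    (W : EuclideanSpace ℝ (Fin d))
    (hcrit : fderiv ℝ L W = 0)
    (hsep : ∀ n, 0 < y n * f n W) :
    False :=
  no_separating_critical_point_general hN hK f hf hhom y L hL W hcrit hsep
end

section
/- Along the gradient flow of the exponential loss, if at time t the function f(W(t)) separates the data (yₙ f(W(t); xₙ) > 0 for all n) and the gradient is nonzero, then the squared Euclidean norm of the weights is strictly increasing at t: d/dt ‖W(t)‖² > 0. -/
open Real
open scoped RealInnerProductSpace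

/-!
Differentiating `‖W‖²` along the flow gives `-2 ⟪W, ∇L(W)⟫`, and `⟪∇L(W), W⟫` is the derivative
of `L` in the radial direction. By Euler's identity `⟪∇fₙ(W), W⟫ = K fₙ(W)` for each degree-`K`
homogeneous `fₙ`, so `⟪W, ∇L(W)⟫ = -K ∑ₙ exp (-yₙ fₙ(W)) yₙ fₙ(W)`, which is negative when every
margin `yₙ fₙ(W)` is positive.
-/

theorem HasFDerivAt.apply_self_eq_of_homogeneous {E F : Type*} [NormedAddCommGroup E]
    [NormedSpace ℝ E] [NormedAddCommGroup F] [NormedSpace ℝ F] {f : E → F} {f' : E →L[ℝ] F}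
    {x : E} {K : ℕ} (hf : HasFDerivAt f f' x)
    (hhom : ∀ l : ℝ, 0 < l → f (l • x) = l ^ K • f x) :
    f' x = (K : ℝ) • f x := by
  have hray : HasDerivAt (fun l : ℝ => l • x) x 1 := by
    simpa using (hasDerivAt_id (1 : ℝ)).smul_const x
  have hcomp : HasDerivAt (fun l : ℝ => f (l • x)) (f' x) 1 :=
    hf.comp_hasDerivAt_of_eq 1 hray (one_smul ℝ x).symm
  have hpow : HasDerivAt (fun l : ℝ => l ^ K • f x) ((K : ℝ) • f x) 1 := by
    simpa using (hasDerivAt_pow K (1 : ℝ)).smul_const (f x)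
  have heq : (fun l : ℝ => f (l • x)) =ᶠ[nhds 1] fun l => l ^ K • f x :=
    Filter.eventually_of_mem (Ioi_mem_nhds one_pos) hhom
  exact hcomp.unique (hpow.congr_of_eventuallyEq heq)

theorem fderiv_sum_exp_neg_margin_apply_self {ι E : Type*} [Fintype ι] [NormedAddCommGroup E]
    [NormedSpace ℝ E] {K : ℕ} {f : ι → E → ℝ} {y : ι → ℝ} {x : E}
    (hf : ∀ n, DifferentiableAt ℝ (f n) x)
    (hhom : ∀ n, ∀ l : ℝ, 0 < l → f n (l • x) = l ^ K * f n x) :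
    fderiv ℝ (fun W => ∑ n, exp (-(y n * f n W))) x x =
      -(K * ∑ n, exp (-(y n * f n x)) * (y n * f n x)) := by
  have hderiv := HasFDerivAt.fun_sum (u := Finset.univ)
    fun n _ => (((hf n).hasFDerivAt.const_mul (y n)).fun_neg).exp
  have heuler n : fderiv ℝ (f n) x x = K * f n x :=
    (hf n).hasFDerivAt.apply_self_eq_of_homogeneous (hhom n)
  rw [hderiv.fderiv, sum_apply, Finset.mul_sum, ← Finset.sum_neg_distrib]
  refine Finset.sum_congr rfl fun n _ => ?_
  simp only [smul_neg, neg_apply, smul_apply, heuler, smul_eq_mul, neg_inj]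
  ring

theorem norm_increasing_along_gradient_flow_general {d N K : ℕ} (hN : 0 < N) (hK : 1 ≤ K)
    (f : Fin N → EuclideanSpace ℝ (Fin d) → ℝ)
    (hf : ∀ n, Differentiable ℝ (f n))
    (hhom : ∀ n, ∀ l : ℝ, 0 < l → ∀ W, f n (l • W) = l ^ K * f n W)
    (y : Fin N → ℝ)
    (L : EuclideanSpace ℝ (Fin d) → ℝ)
    (hL : L = fun W => ∑ n, exp (-(y n * f n W)))
    (W : ℝ → EuclideanSpace ℝ (Fin d)) (hW : Differentiable ℝ W)
    (hflow : ∀ t, deriv W t = -gradient L (W t))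
    (t : ℝ)
    (hsep : ∀ n, 0 < y n * f n (W t)) :
    0 < deriv (fun s => ‖W s‖ ^ 2) t := by
  subst hL
  have hK' : (0 : ℝ) < K := by exact_mod_cast hK
  have hmargins : 0 < ∑ n, exp (-(y n * f n (W t))) * (y n * f n (W t)) :=
    Finset.sum_pos (fun n _ => mul_pos (exp_pos _) (hsep n)) ⟨⟨0, hN⟩, Finset.mem_univ _⟩
  rw [(hW t).hasDerivAt.norm_sq.deriv, hflow t, inner_neg_right, real_inner_comm,
    inner_gradient_left, fderiv_sum_exp_neg_margin_apply_self (fun n => (hf n).differentiableAt)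
      fun n l hl => hhom n l hl (W t)]
  nlinarith

/-- Along the gradient flow of the exponential loss, when the data is separated
at time t and the gradient is nonzero, the squared norm of the weights is
strictly increasing. -/
theorem norm_increasing_along_gradient_flow {d N K : ℕ} (hN : 0 < N) (hK : 1 ≤ K)
    (f : Fin N → EuclideanSpace ℝ (Fin d) → ℝ)
    (hf : ∀ n, Differentiable ℝ (f n))
    (hhom : ∀ n, ∀ l : ℝ, 0 < l → ∀ W, f n (l • W) = l ^ K * f n W)
    (y : Fin N → ℝ) (hy : ∀ n, y n = 1 ∨ y n = -1)
    (L : EuclideanSpace ℝ (Fin d) → ℝ)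
    (hL : L = fun W => ∑ n, exp (-(y n * f n W)))
    (W : ℝ → EuclideanSpace ℝ (Fin d)) (hW : Differentiable ℝ W)
    (hflow : ∀ t, deriv W t = -gradient L (W t))
    (t : ℝ)
    (hsep : ∀ n, 0 < y n * f n (W t))
    (hgrad : gradient L (W t) ≠ 0) :
    0 < deriv (fun s => ‖W s‖ ^ 2) t :=
  norm_increasing_along_gradient_flow_general hN hK f hf hhom y L hL W hW hflow t hsep
end

section
/- Let ℓ(z) = e^{−z} be the exponential loss and suppose functions f in a class satisfy f = ρ·f̃ with ρ > 0 fixed. If V* minimizes the empirical exponential loss Σₙ exp(−ρ yₙ f̃(V; xₙ)) over unit-norm V for every sufficiently large ρ along a sequence ρⱼ → ∞, and the margin function η(V) = minₙ yₙ f̃(V; xₙ) is continuous on the compact unit sphere, then any limit point of the minimizers V(ρⱼ) maximizes the margin η over the unit sphere. -/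
open Real Filter
open scoped RealInnerProductSpace

/-- Margin maximization: any limit point of unit-norm minimizers of the
exponential loss along ρⱼ → ∞ maximizes the margin η(V) = minₙ yₙ f̃(V; xₙ)
over the unit sphere. -/
theorem margin_maximization {d N : ℕ} [NeZero N]
    (F : EuclideanSpace ℝ (Fin d) → Fin N → ℝ)
    (hF : Continuous fun V => F V)
    (y : Fin N → ℝ) (hy : ∀ n, y n = 1 ∨ y n = -1)
    (η : EuclideanSpace ℝ (Fin d) → ℝ)
    (hη : η = fun V => ⨅ n : Fin N, y n * F V n)
    (hsep : ∃ V, ‖V‖ = 1 ∧ 0 < η V)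
    (ρ : ℕ → ℝ) (hρpos : ∀ j, 0 < ρ j) (hρ : Tendsto ρ atTop atTop)
    (Vs : ℕ → EuclideanSpace ℝ (Fin d)) (hVs : ∀ j, ‖Vs j‖ = 1)
    (hmin : ∀ j, ∀ U, ‖U‖ = 1 →
      ∑ n, exp (-(ρ j * (y n * F (Vs j) n))) ≤ ∑ n, exp (-(ρ j * (y n * F U n))))
    (Vstar : EuclideanSpace ℝ (Fin d))
    (hlim : ∃ φ : ℕ → ℕ, StrictMono φ ∧ Tendsto (Vs ∘ φ) atTop (nhds Vstar)) :
    ‖Vstar‖ = 1 ∧ ∀ U, ‖U‖ = 1 → η U ≤ η Vstar := by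
  obtain ⟨φ, hφ, hφlim⟩ := hlim
  have hNpos : 0 < (N : ℝ) := Nat.cast_pos.mpr (Nat.pos_of_ne_zero (NeZero.ne N))
  -- norm of limit
  have hnorm : ‖Vstar‖ = 1 := by
    have h1 : Tendsto (fun j => ‖(Vs ∘ φ) j‖) atTop (nhds ‖Vstar‖) :=
      (continuous_norm.tendsto Vstar).comp hφlim
    have h2 : (fun j => ‖(Vs ∘ φ) j‖) = fun _ => (1 : ℝ) := by
      funext j; exact hVs (φ j)
    rw [h2] at h1
    exact (tendsto_const_nhds_iff.mp h1).symm
  refine ⟨hnorm, fun U hU => ?_⟩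
  -- continuity of η
  have hηcont : Continuous η := by
    rw [hη]
    have : (fun V => ⨅ n : Fin N, y n * F V n)
        = fun V => Finset.univ.inf' Finset.univ_nonempty (fun n => y n * F V n) := by
      funext V; rw [Finset.inf'_univ_eq_ciInf]
    rw [this]
    exact Continuous.finset_inf'_apply Finset.univ_nonempty
      (fun n _ => continuous_const.mul ((continuous_apply n).comp hF))
  -- key inequality: ∀ j, η U - η (Vs j) ≤ log N / ρ j
  have hkey : ∀ j, η U - η (Vs j) ≤ Real.log N / ρ j := by
    intro j
    -- η (Vs j) is attained
    obtain ⟨m, hm⟩ := exists_eq_ciInf_of_finite (f := fun n => y n * F (Vs j) n)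
    have hbdd : ∀ V : EuclideanSpace ℝ (Fin d), ∀ n, η V ≤ y n * F V n := by
      intro V n
      rw [hη]
      exact ciInf_le (Set.Finite.bddBelow (Set.finite_range _)) n
    have h1 : exp (-(ρ j * η (Vs j))) ≤ ∑ n, exp (-(ρ j * (y n * F (Vs j) n))) := by
      have heq : η (Vs j) = y m * F (Vs j) m := by rw [hη]; exact hm.symm
      rw [heq]
      exact Finset.single_le_sum (f := fun n => exp (-(ρ j * (y n * F (Vs j) n))))
        (fun n _ => (exp_pos _).le) (Finset.mem_univ m)
    have h2 : ∑ n, exp (-(ρ j * (y n * F U n))) ≤ N * exp (-(ρ j * η U)) := by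
      calc ∑ n, exp (-(ρ j * (y n * F U n)))
          ≤ ∑ _n : Fin N, exp (-(ρ j * η U)) := by
            apply Finset.sum_le_sum
            intro n _
            apply exp_le_exp.mpr
            have := hbdd U n
            nlinarith [hρpos j]
        _ = N * exp (-(ρ j * η U)) := by
            rw [Finset.sum_const, Finset.card_univ, Fintype.card_fin, nsmul_eq_mul]
    have h3 : exp (-(ρ j * η (Vs j))) ≤ N * exp (-(ρ j * η U)) :=
      h1.trans ((hmin j U hU).trans h2)
    have h4 : -(ρ j * η (Vs j)) ≤ Real.log N + -(ρ j * η U) := by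
      have := Real.log_le_log (exp_pos _) h3
      rwa [Real.log_exp, Real.log_mul (ne_of_gt hNpos) (ne_of_gt (exp_pos _)),
        Real.log_exp] at this
    have hρj := hρpos j
    rw [div_eq_inv_mul]
    have h5 : ρ j * (η U - η (Vs j)) ≤ Real.log N := by nlinarith
    calc η U - η (Vs j) = (ρ j)⁻¹ * (ρ j * (η U - η (Vs j))) := by
          field_simp
      _ ≤ (ρ j)⁻¹ * Real.log N :=
          mul_le_mul_of_nonneg_left h5 (inv_nonneg.mpr hρj.le)
  -- take limits along the subsequence
  have hρφ : Tendsto (fun j => ρ (φ j)) atTop atTop :=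
    hρ.comp hφ.tendsto_atTop
  have hdiv : Tendsto (fun j => Real.log N / ρ (φ j)) atTop (nhds 0) :=
    Tendsto.div_atTop tendsto_const_nhds hρφ
  have hηlim : Tendsto (fun j => η (Vs (φ j))) atTop (nhds (η Vstar)) :=
    (hηcont.tendsto Vstar).comp hφlim
  have hsub : Tendsto (fun j => η U - η (Vs (φ j))) atTop (nhds (η U - η Vstar)) :=
    tendsto_const_nhds.sub hηlim
  have hle : η U - η Vstar ≤ 0 := by
    have := le_of_tendsto_of_tendsto hsub hdiv
      (Filter.Eventually.of_forall fun j => hkey (φ j))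
    linarith [this]
  linarith
end
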